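/- arXiv:2108.12647 — 2 statements merged into one kernel-verified Lean document; each statement's English description precedes it below -/
import Mathlib

section
/- If (X, Y, Z) is a Markov triangle of finite random variables on a probability space (Ω, Σ, μ), then the mutual informations satisfy I(X, Z) = I(X, Y) + I(Y, Z) - I(Y, Y); in particular I(X, Z) ≤ I(X, Y) + I(Y, Z). -/
open MeasureTheory Filter Topology

/-- A finite random variable on a measurable space `Ω`: a map into a finite set whose
fibers are measurable. -/
structure FRV (Ω : Type) [MeasurableSpace Ω] where
  α : Type
  fintype : Fintype α
  X : Ω → α
  meas : ∀ a : α, MeasurableSet (X ⁻¹' {a})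

attribute [instance] FRV.fintype

/-- A probability distribution on a finite set. -/
def IsProbDist {β : Type} [Fintype β] (p : β → ℝ) : Prop :=
  (∀ b, 0 ≤ p b) ∧ ∑ b, p b = 1

/-- Shannon entropy of a distribution on a finite set. -/
noncomputable def entropyOfDist {β : Type} [Fintype β] (p : β → ℝ) : ℝ :=
  -∑ b, p b * Real.log (p b)

namespace FRV

variable {Ω Ω' : Type} [MeasurableSpace Ω] [MeasurableSpace Ω']

/-- The probability mass function of a finite random variable. -/
noncomputable def pmf (μ : Measure Ω) (X : FRV Ω) : X.α → ℝ :=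
  fun a => (μ (X.X ⁻¹' {a})).toReal

/-- The Shannon entropy of a finite random variable. -/
noncomputable def entropy (μ : Measure Ω) (X : FRV Ω) : ℝ :=
  entropyOfDist (X.pmf μ)

/-- The canonical product `𝒫(X,Y)` of two finite random variables on a common space. -/
def prod (X Y : FRV Ω) : FRV Ω where
  α := X.α × Y.α
  fintype := inferInstance
  X := fun ω => (X.X ω, Y.X ω)
  meas := by
    rintro ⟨a, b⟩
    have h : (fun ω => (X.X ω, Y.X ω)) ⁻¹' {(a, b)} = X.X ⁻¹' {a} ∩ Y.X ⁻¹' {b} := by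
      ext ω; simp [Prod.ext_iff]
    rw [h]
    exact (X.meas a).inter (Y.meas b)

/-- Post-composition of a finite random variable with a map of finite sets. -/
def map (X : FRV Ω) {β : Type} [Fintype β] (f : X.α → β) : FRV Ω where
  α := β
  fintype := inferInstance
  X := f ∘ X.X
  meas := by
    intro b
    have h : (f ∘ X.X) ⁻¹' {b} = ⋃ a ∈ {a | f a = b}, X.X ⁻¹' {a} := by
      ext ω; simp
    rw [h]
    exact MeasurableSet.biUnion (Set.to_countable _) fun a _ => X.meas a

/-- Pullback of a finite random variable along a measurable map. -/
def comap (X : FRV Ω) (π : Ω' → Ω) (hπ : Measurable π) : FRV Ω' where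
  α := X.α
  fintype := X.fintype
  X := X.X ∘ π
  meas := by
    intro a
    rw [Set.preimage_comp]
    exact hπ (X.meas a)

/-- A constant random variable: one whose support is a one-element set. -/
def IsConstant (C : FRV Ω) : Prop := ∀ a b : C.α, a = b

/-- Weak convergence (convergence in distribution) of a sequence of finite random
variables: eventually the supports coincide, and the probability mass functions
converge pointwise. -/
def WeakConv (μ : Measure Ω) (Xs : ℕ → FRV Ω) (X : FRV Ω) : Prop :=
  (∃ N, ∀ n ≥ N, (Xs n).α = X.α) ∧
  ∀ a : X.α,
    Tendsto
      (fun n => @dite _ ((Xs n).α = X.α) (Classical.dec _)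
        (fun h => (Xs n).pmf μ (cast h.symm a)) (fun _ => 0))
      atTop (𝓝 (X.pmf μ a))

/-- Weak convergence of a sequence of pairs of finite random variables: weak convergence
of the canonical products. -/
def WeakConvPair (μ : Measure Ω) (Xs Ys : ℕ → FRV Ω) (X Y : FRV Ω) : Prop :=
  WeakConv μ (fun n => (Xs n).prod (Ys n)) (X.prod Y)

/-- The discrete measure on a finite set associated with a real-valued weight function. -/
noncomputable def discMeasure {𝒳 : Type} [Fintype 𝒳] [MeasurableSpace 𝒳] (p : 𝒳 → ℝ) :
    Measure 𝒳 :=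
  Measure.sum fun x => ENNReal.ofReal (p x) • Measure.dirac x

/-- The `p`-weighted convex sum of a family of finite random variables, a random variable
on `𝒳 × Ω` valued in the disjoint union `Σ x, 𝒴ˣ` (the weights `p` enter through the
product measure `(discMeasure p).prod μ` on `𝒳 × Ω`). -/
def convexSum {𝒳 : Type} [Fintype 𝒳] [MeasurableSpace 𝒳] [MeasurableSingletonClass 𝒳]
    (Y : 𝒳 → FRV Ω) : FRV (𝒳 × Ω) where
  α := Σ x : 𝒳, (Y x).α
  fintype := inferInstance
  X := fun q => ⟨q.1, (Y q.1).X q.2⟩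
  meas := by
    rintro ⟨x₀, y₀⟩
    have h : (fun q : 𝒳 × Ω => (⟨q.1, (Y q.1).X q.2⟩ : Σ x : 𝒳, (Y x).α)) ⁻¹' {⟨x₀, y₀⟩}
        = {x₀} ×ˢ ((Y x₀).X ⁻¹' {y₀}) := by
      ext ⟨x, ω⟩
      simp only [Set.mem_preimage, Set.mem_singleton_iff, Set.mem_prod, Sigma.mk.inj_iff]
      constructor
      · rintro ⟨rfl, h2⟩
        exact ⟨rfl, eq_of_heq h2⟩
      · rintro ⟨rfl, h2⟩
        exact ⟨rfl, heq_of_eq h2⟩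
    rw [h]
    exact (measurableSet_singleton x₀).prod ((Y x₀).meas y₀)

end FRV

section InfoMeasures

variable {Ω : Type} [MeasurableSpace Ω]

/-- The joint distribution function `ϑ(x,y) = μ(X⁻¹{x} ∩ Y⁻¹{y})` of a pair of finite
random variables. -/
noncomputable def jointDist (μ : Measure Ω) (X Y : FRV Ω) : X.α → Y.α → ℝ :=
  fun a b => (μ (X.X ⁻¹' {a} ∩ Y.X ⁻¹' {b})).toReal

/-- The joint entropy `H(X,Y)` of a pair of finite random variables. -/
noncomputable def jointEntropy (μ : Measure Ω) (X Y : FRV Ω) : ℝ :=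
  -∑ a, ∑ b, jointDist μ X Y a b * Real.log (jointDist μ X Y a b)

/-- The mutual information `I(X,Y) = H(X) + H(Y) - H(X,Y)`. -/
noncomputable def mutualInfo (μ : Measure Ω) (X Y : FRV Ω) : ℝ :=
  X.entropy μ + Y.entropy μ - jointEntropy μ X Y

/-- The conditional distribution `q(y|x)` of `Y` given `X = x`. -/
noncomputable def condDist (μ : Measure Ω) (X Y : FRV Ω) : X.α → Y.α → ℝ :=
  fun a b => if X.pmf μ a ≠ 0 then jointDist μ X Y a b / X.pmf μ a else 0

/-- The conditional entropy `H(Y|X) = ∑ₓ p(x) H(q(·|x))`. -/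
noncomputable def condEntropy (μ : Measure Ω) (X Y : FRV Ω) : ℝ :=
  ∑ a, X.pmf μ a * entropyOfDist (condDist μ X Y a)

/-- `h : 𝒵 × 𝒳 → 𝒴` is a mediator function for the triple `(X, Y, Z)` if
`r(z|x) = p(z|h(z,x)) · q(h(z,x)|x)` for all `(z,x)`. -/
def IsMediator (μ : Measure Ω) (X Y Z : FRV Ω) (h : Z.α × X.α → Y.α) : Prop :=
  ∀ z x, condDist μ X Z x z = condDist μ Y Z (h (z, x)) z * condDist μ X Y x (h (z, x))

/-- A triple `(X, Y, Z)` of finite random variables is a Markov triangle if it admits a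
mediator function. -/
def IsMarkovTriangle (μ : Measure Ω) (X Y Z : FRV Ω) : Prop :=
  ∃ h : Z.α × X.α → Y.α, IsMediator μ X Y Z h

end InfoMeasures

/-- A map assigning a real number to every ordered pair of finite random variables
defined on a common probability space. -/
abbrev PairFunctional :=
  ∀ (Ω : Type) [MeasurableSpace Ω], Measure Ω → FRV Ω → FRV Ω → ℝ

namespace PF

/-- `F` is non-negative. -/
def Nonneg (F : PairFunctional) : Prop :=
  ∀ (Ω : Type) [MeasurableSpace Ω] (μ : Measure Ω) [IsProbabilityMeasure μ]
    (X Y : FRV Ω), 0 ≤ F Ω μ X Y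

/-- `F` is symmetric. -/
def Symm (F : PairFunctional) : Prop :=
  ∀ (Ω : Type) [MeasurableSpace Ω] (μ : Measure Ω) [IsProbabilityMeasure μ]
    (X Y : FRV Ω), F Ω μ X Y = F Ω μ Y X

/-- `F` is continuous: it respects weak convergence of pairs. -/
def Continuous (F : PairFunctional) : Prop :=
  ∀ (Ω : Type) [MeasurableSpace Ω] (μ : Measure Ω) [IsProbabilityMeasure μ]
    (Xs Ys : ℕ → FRV Ω) (X Y : FRV Ω), FRV.WeakConvPair μ Xs Ys X Y →
    Tendsto (fun n => F Ω μ (Xs n) (Ys n)) atTop (𝓝 (F Ω μ X Y))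

/-- `F` is weakly functorial: `F(X,Z) = F(X,Y) + F(Y,Z) - F(Y,Y)` on Markov triangles. -/
def WeaklyFunctorial (F : PairFunctional) : Prop :=
  ∀ (Ω : Type) [MeasurableSpace Ω] (μ : Measure Ω) [IsProbabilityMeasure μ]
    (X Y Z : FRV Ω), IsMarkovTriangle μ X Y Z →
    F Ω μ X Z = F Ω μ X Y + F Ω μ Y Z - F Ω μ Y Y

/-- `F` is invariant under pullbacks along measure-preserving maps. -/
def PullbackInvariant (F : PairFunctional) : Prop :=
  ∀ (Ω Ω' : Type) [MeasurableSpace Ω] [MeasurableSpace Ω']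
    (μ : Measure Ω) (μ' : Measure Ω') [IsProbabilityMeasure μ] [IsProbabilityMeasure μ']
    (π : Ω' → Ω) (hπ : MeasurePreserving π μ' μ) (X Y : FRV Ω),
    F Ω μ X Y = F Ω' μ' (X.comap π hπ.measurable) (Y.comap π hπ.measurable)

/-- `F(X,C) = 0` for every constant random variable `C`. -/
def VanishesOnConstants (F : PairFunctional) : Prop :=
  ∀ (Ω : Type) [MeasurableSpace Ω] (μ : Measure Ω) [IsProbabilityMeasure μ]
    (X C : FRV Ω), C.IsConstant → F Ω μ X C = 0

/-- `F` is strongly additive: for a finite random variable `X` with probability mass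
function `p` and a family of pairs `(Yˣ, Zˣ)` indexed by the support of `X`,
`F(⊕ₓ p(x)(Yˣ,Zˣ)) = F(X,X) + ∑ₓ p(x) F(Yˣ,Zˣ)`. -/
def StronglyAdditive (F : PairFunctional) : Prop :=
  ∀ (Ω : Type) [MeasurableSpace Ω] (μ : Measure Ω) [IsProbabilityMeasure μ]
    (X : FRV Ω) (Y Z : X.α → FRV Ω),
    letI : MeasurableSpace X.α := ⊤
    letI : MeasurableSingletonClass X.α := ⟨fun _ => MeasurableSpace.measurableSet_top⟩
    F (X.α × Ω) ((FRV.discMeasure (X.pmf μ)).prod μ) (FRV.convexSum Y) (FRV.convexSum Z)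
      = F Ω μ X X + ∑ x, X.pmf μ x * F Ω μ (Y x) (Z x)

end PF

/-- Mutual information as a pair functional. -/
noncomputable def MIfun : PairFunctional := fun _ _ μ X Y => mutualInfo μ X Y

/-!
With `θ(x,y,z) = ϑ(x,y) p(z|y)`, the mediator condition forces `θ(x,·,z)` to be concentrated at
`y = h(z,x)`, where it equals `ϑ(x,z)`. Since `θ(x,y,z) p(y) = ϑ(x,y) ϑ(y,z)`, summing `θ log θ`
over all triples gives `H(X,Z) = H(X,Y) + H(Y,Z) - H(Y)`, and `I(Y,Y) = H(Y) ≥ 0`.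
-/

open Finset

namespace FRV

variable {Ω : Type} [MeasurableSpace Ω] (μ : Measure Ω) (X : FRV Ω)

lemma pmf_nonneg (a : X.α) : 0 ≤ X.pmf μ a := ENNReal.toReal_nonneg

lemma pmf_le_one [IsProbabilityMeasure μ] (a : X.α) : X.pmf μ a ≤ 1 :=
  ENNReal.toReal_le_of_le_ofReal zero_le_one (by simpa using prob_le_one)

lemma entropy_nonneg [IsProbabilityMeasure μ] : 0 ≤ X.entropy μ :=
  neg_nonneg.2 <| sum_nonpos fun a _ => mul_nonpos_of_nonneg_of_nonpos (X.pmf_nonneg μ a)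
    (Real.log_nonpos (X.pmf_nonneg μ a) (X.pmf_le_one μ a))

end FRV

section JointDistribution

variable {Ω : Type} [MeasurableSpace Ω] (μ : Measure Ω) (X Y : FRV Ω)

lemma jointDist_nonneg (a : X.α) (b : Y.α) : 0 ≤ jointDist μ X Y a b := ENNReal.toReal_nonneg

lemma jointDist_comm (a : X.α) (b : Y.α) : jointDist μ X Y a b = jointDist μ Y X b a := by
  rw [jointDist, jointDist, Set.inter_comm]

lemma sum_jointDist_right [IsFiniteMeasure μ] (a : X.α) :
    ∑ b, jointDist μ X Y a b = X.pmf μ a := by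
  have hfibers := sum_measure_preimage_singleton (μ := μ.restrict (X.X ⁻¹' {a})) univ
    fun b _ => Y.meas b
  simp only [Measure.restrict_apply (Y.meas _), coe_univ, Set.preimage_univ,
    Measure.restrict_apply_univ] at hfibers
  rw [FRV.pmf, ← hfibers, ENNReal.toReal_sum fun b _ => measure_ne_top μ _]
  simp only [jointDist, Set.inter_comm]

lemma sum_jointDist_left [IsFiniteMeasure μ] (b : Y.α) :
    ∑ a, jointDist μ X Y a b = Y.pmf μ b := by
  simp only [jointDist_comm μ X Y _ b, sum_jointDist_right]

lemma jointDist_eq_zero_of_pmf_eq_zero [IsFiniteMeasure μ] {a : X.α} (ha : X.pmf μ a = 0)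
    (b : Y.α) : jointDist μ X Y a b = 0 :=
  le_antisymm
    (ha ▸ ENNReal.toReal_mono (measure_ne_top μ _) (measure_mono Set.inter_subset_left))
    (jointDist_nonneg μ X Y a b)

lemma jointDist_self [DecidableEq Y.α] (a b : Y.α) :
    jointDist μ Y Y a b = if a = b then Y.pmf μ a else 0 := by
  split_ifs with hab
  · rw [hab, jointDist, Set.inter_self, FRV.pmf]
  · rw [jointDist, Set.disjoint_iff_inter_eq_empty.1 ((Set.disjoint_singleton.2 hab).preimage _),
      measure_empty, ENNReal.toReal_zero]

lemma mutualInfo_self : mutualInfo μ Y Y = Y.entropy μ := by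
  classical
  have : jointEntropy μ Y Y = Y.entropy μ := by
    simp [jointEntropy, jointDist_self, FRV.entropy, entropyOfDist]
  rw [mutualInfo, this]
  ring

lemma condDist_nonneg (a : X.α) (b : Y.α) : 0 ≤ condDist μ X Y a b := by
  unfold condDist
  split_ifs
  exacts [div_nonneg (jointDist_nonneg μ X Y a b) (X.pmf_nonneg μ a), le_rfl]

lemma condDist_mul_pmf [IsFiniteMeasure μ] (a : X.α) (b : Y.α) :
    condDist μ X Y a b * X.pmf μ a = jointDist μ X Y a b := by
  by_cases ha : X.pmf μ a = 0
  · rw [ha, mul_zero, jointDist_eq_zero_of_pmf_eq_zero μ X Y ha]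
  · rw [condDist, if_pos ha, div_mul_cancel₀ _ ha]

lemma sum_condDist [IsFiniteMeasure μ] {a : X.α} (ha : X.pmf μ a ≠ 0) :
    ∑ b, condDist μ X Y a b = 1 := by
  rw [← mul_left_inj' ha, sum_mul, one_mul]
  simp only [condDist_mul_pmf, sum_jointDist_right]

lemma sum_condDist_le_one [IsFiniteMeasure μ] (a : X.α) : ∑ b, condDist μ X Y a b ≤ 1 := by
  by_cases ha : X.pmf μ a = 0
  · simp [condDist, ha]
  · exact (sum_condDist μ X Y ha).le

end JointDistribution

section MarkovJointDist

variable {Ω : Type} [MeasurableSpace Ω] (μ : Measure Ω) (X Y Z : FRV Ω)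

/-- `θ(x,y,z) = ϑ(x,y) p(z|y)`, the law of a Markov chain `X → Y → Z` with the pair marginals
of `(X, Y)` and `(Y, Z)`. -/
noncomputable def markovJointDist (x : X.α) (y : Y.α) (z : Z.α) : ℝ :=
  jointDist μ X Y x y * condDist μ Y Z y z

variable [IsFiniteMeasure μ]

lemma sum_markovJointDist_right (x : X.α) (y : Y.α) :
    ∑ z, markovJointDist μ X Y Z x y z = jointDist μ X Y x y := by
  simp only [markovJointDist, ← mul_sum]
  by_cases hy : Y.pmf μ y = 0
  · rw [jointDist_comm, jointDist_eq_zero_of_pmf_eq_zero μ Y X hy, zero_mul]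
  · rw [sum_condDist μ Y Z hy, mul_one]

lemma sum_markovJointDist_left (y : Y.α) (z : Z.α) :
    ∑ x, markovJointDist μ X Y Z x y z = jointDist μ Y Z y z := by
  simp only [markovJointDist]
  rw [← sum_mul, sum_jointDist_left, mul_comm, condDist_mul_pmf]

lemma markovJointDist_mul_pmf (x : X.α) (y : Y.α) (z : Z.α) :
    markovJointDist μ X Y Z x y z * Y.pmf μ y = jointDist μ X Y x y * jointDist μ Y Z y z := by
  rw [markovJointDist, mul_assoc, condDist_mul_pmf]

lemma markovJointDist_mul_log (x : X.α) (y : Y.α) (z : Z.α) :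
    markovJointDist μ X Y Z x y z * Real.log (markovJointDist μ X Y Z x y z)
      = markovJointDist μ X Y Z x y z * Real.log (jointDist μ X Y x y)
        + markovJointDist μ X Y Z x y z * Real.log (jointDist μ Y Z y z)
        - markovJointDist μ X Y Z x y z * Real.log (Y.pmf μ y) := by
  set θ := markovJointDist μ X Y Z x y z with hθ_def
  rcases eq_or_ne θ 0 with hθ | hθ
  · simp [hθ]
  have hXY : jointDist μ X Y x y ≠ 0 := left_ne_zero_of_mul hθ
  have hcond : condDist μ Y Z y z ≠ 0 := right_ne_zero_of_mul hθ
  have hY : Y.pmf μ y ≠ 0 := fun hY => hcond (by simp [condDist, hY])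
  have hYZ : jointDist μ Y Z y z ≠ 0 := by
    rw [← condDist_mul_pmf]
    exact mul_ne_zero hcond hY
  have hlog : Real.log θ + Real.log (Y.pmf μ y)
      = Real.log (jointDist μ X Y x y) + Real.log (jointDist μ Y Z y z) := by
    rw [← Real.log_mul hθ hY, ← Real.log_mul hXY hYZ, hθ_def, markovJointDist_mul_pmf]
  linear_combination θ * hlog

end MarkovJointDist

namespace IsMediator

variable {Ω : Type} [MeasurableSpace Ω] {μ : Measure Ω} [IsFiniteMeasure μ] {X Y Z : FRV Ω}
  {h : Z.α × X.α → Y.α}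

/- `r(z|x)` is the `y = h(z,x)` term of `∑_y p(z|y) q(y|x)`, which has total mass at most `1`
in `z`; as `r(·|x)` has total mass `1`, all the other terms vanish. -/
theorem condDist_mul_condDist_eq_zero (hmed : IsMediator μ X Y Z h) {x : X.α}
    (hx : X.pmf μ x ≠ 0) {y : Y.α} {z : Z.α} (hy : y ≠ h (z, x)) :
    condDist μ Y Z y z * condDist μ X Y x y = 0 := by
  classical
  have hterm : ∀ y z, 0 ≤ condDist μ Y Z y z * condDist μ X Y x y := fun y z =>
    mul_nonneg (condDist_nonneg μ Y Z y z) (condDist_nonneg μ X Y x y)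
  have hle : ∀ z, condDist μ X Z x z ≤ ∑ y, condDist μ Y Z y z * condDist μ X Y x y :=
    fun z => (hmed z x).trans_le (single_le_sum (fun y _ => hterm y z) (mem_univ _))
  have hmass : ∑ z, ∑ y, condDist μ Y Z y z * condDist μ X Y x y ≤ ∑ z, condDist μ X Z x z :=
    calc ∑ z, ∑ y, condDist μ Y Z y z * condDist μ X Y x y
        = ∑ y, (∑ z, condDist μ Y Z y z) * condDist μ X Y x y := by
          rw [sum_comm]
          simp only [sum_mul]
      _ ≤ ∑ y, condDist μ X Y x y := sum_le_sum fun y _ =>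
          mul_le_of_le_one_left (condDist_nonneg μ X Y x y) (sum_condDist_le_one μ Y Z y)
      _ = ∑ z, condDist μ X Z x z := by rw [sum_condDist μ X Y hx, sum_condDist μ X Z hx]
  have heq : ∀ z ∈ univ, condDist μ X Z x z = ∑ y, condDist μ Y Z y z * condDist μ X Y x y :=
    (sum_eq_sum_iff_of_le fun z _ => hle z).1 ((sum_le_sum fun z _ => hle z).antisymm hmass)
  have hz : ∑ y, condDist μ Y Z y z * condDist μ X Y x y
      = condDist μ Y Z (h (z, x)) z * condDist μ X Y x (h (z, x)) :=
    (heq z (mem_univ z)).symm.trans (hmed z x)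
  rw [← add_sum_erase _ _ (mem_univ (h (z, x))), add_eq_left] at hz
  exact (sum_eq_zero_iff_of_nonneg fun y _ => hterm y z).1 hz y (mem_erase.2 ⟨hy, mem_univ y⟩)

theorem markovJointDist_eq_zero (hmed : IsMediator μ X Y Z h) {x : X.α} {y : Y.α} {z : Z.α}
    (hy : y ≠ h (z, x)) : markovJointDist μ X Y Z x y z = 0 := by
  by_cases hx : X.pmf μ x = 0
  · rw [markovJointDist, jointDist_eq_zero_of_pmf_eq_zero μ X Y hx, zero_mul]
  · rw [markovJointDist, ← condDist_mul_pmf, mul_right_comm, mul_comm (condDist μ X Y x y),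
      hmed.condDist_mul_condDist_eq_zero hx hy, zero_mul]

theorem jointDist_eq (hmed : IsMediator μ X Y Z h) (x : X.α) (z : Z.α) :
    jointDist μ X Z x z = markovJointDist μ X Y Z x (h (z, x)) z := by
  rw [markovJointDist, ← condDist_mul_pmf, ← condDist_mul_pmf, hmed z x]
  ring

theorem jointEntropy_eq (hmed : IsMediator μ X Y Z h) :
    jointEntropy μ X Z = jointEntropy μ X Y + jointEntropy μ Y Z - Y.entropy μ := by
  set θ := markovJointDist μ X Y Z
  have hXZ : ∀ x z, jointDist μ X Z x z * Real.log (jointDist μ X Z x z)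
      = ∑ y, θ x y z * Real.log (θ x y z) := fun x z => by
    rw [hmed.jointDist_eq, sum_eq_single (h (z, x))
      (fun y _ hy => by simp only [θ, hmed.markovJointDist_eq_zero hy, zero_mul]) (by simp)]
  have hXY : ∑ x, ∑ y, ∑ z, θ x y z * Real.log (jointDist μ X Y x y)
      = ∑ x, ∑ y, jointDist μ X Y x y * Real.log (jointDist μ X Y x y) := by
    simp only [θ, ← sum_mul, sum_markovJointDist_right]
  have hYZ : ∑ x, ∑ y, ∑ z, θ x y z * Real.log (jointDist μ Y Z y z)
      = ∑ y, ∑ z, jointDist μ Y Z y z * Real.log (jointDist μ Y Z y z) := by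
    rw [sum_comm]
    refine sum_congr rfl fun y _ => ?_
    rw [sum_comm]
    simp only [θ, ← sum_mul, sum_markovJointDist_left]
  have hY : ∑ x, ∑ y, ∑ z, θ x y z * Real.log (Y.pmf μ y)
      = ∑ y, Y.pmf μ y * Real.log (Y.pmf μ y) := by
    rw [sum_comm]
    refine sum_congr rfl fun y _ => ?_
    rw [sum_comm]
    simp only [θ, ← sum_mul, sum_markovJointDist_left, sum_jointDist_right]
  simp only [jointEntropy, FRV.entropy, entropyOfDist, hXZ]
  rw [sum_congr rfl fun x _ => sum_comm]
  simp only [θ, markovJointDist_mul_log, sum_add_distrib, sum_sub_distrib]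
  rw [hXY, hYZ, hY]
  ring

end IsMediator

/-- If `(X,Y,Z)` is a Markov triangle, then
`I(X,Z) = I(X,Y) + I(Y,Z) - I(Y,Y)`; in particular `I(X,Z) ≤ I(X,Y) + I(Y,Z)`. -/
theorem mutualInfo_markovTriangle {Ω : Type} [MeasurableSpace Ω] (μ : Measure Ω)
    [IsProbabilityMeasure μ] (X Y Z : FRV Ω) (h : IsMarkovTriangle μ X Y Z) :
    mutualInfo μ X Z = mutualInfo μ X Y + mutualInfo μ Y Z - mutualInfo μ Y Y ∧
      mutualInfo μ X Z ≤ mutualInfo μ X Y + mutualInfo μ Y Z := by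
  obtain ⟨_, hmed⟩ := h
  have hXZ : mutualInfo μ X Z = mutualInfo μ X Y + mutualInfo μ Y Z - Y.entropy μ := by
    rw [mutualInfo, mutualInfo, mutualInfo, hmed.jointEntropy_eq]
    ring
  rw [mutualInfo_self]
  exact ⟨hXZ, by linarith [Y.entropy_nonneg μ]⟩
end

section
/- Let F be a map assigning a non-negative real number F(X,Y) to every ordered pair of finite random variables defined on a common probability space, and suppose F is continuous, strongly additive, symmetric, weakly functorial, invariant under pullbacks, and satisfies F(X,C) = 0 for every constant random variable C. Then for every pair (X, Y) of finite random variables, F(X, 𝒫(X,Y)) = F(X, X) and F(𝒫(X,Y), Y) = F(Y, Y). -/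
open MeasureTheory Filter Topology

/-
The canonical product `P = 𝒫(X,Y)` determines `X`, so for a constant `C` the triple `(P, X, C)`
is a Markov triangle with mediator `(c, (x, y)) ↦ x`: every conditional probability that occurs
is `0` or `1`. Weak functoriality then reads `F(P,C) = F(P,X) + F(X,C) - F(X,X)`, and since `F`
vanishes on constants, `F(P,X) = F(X,X)`. Likewise `F(P,Y) = F(Y,Y)`, and symmetry turns
`F(P,X)` into `F(X,P)`.
-/

namespace FRV

variable {Ω : Type} [MeasurableSpace Ω]

def unit (Ω : Type) [MeasurableSpace Ω] : FRV Ω where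
  α := Unit
  fintype := inferInstance
  X := fun _ => ()
  meas := fun _ => by simp

theorem isConstant_unit : (unit Ω).IsConstant := fun _ _ => rfl

theorem preimage_eq_univ_of_isConstant {C : FRV Ω} (hC : C.IsConstant) (c : C.α) :
    C.X ⁻¹' {c} = Set.univ :=
  Set.eq_univ_of_forall fun ω => hC (C.X ω) c

theorem preimage_prod_subset_fst (X Y : FRV Ω) (w : (X.prod Y).α) :
    (X.prod Y).X ⁻¹' {w} ⊆ X.X ⁻¹' {w.1} :=
  fun _ hω => congrArg Prod.fst hω

theorem preimage_prod_subset_snd (X Y : FRV Ω) (w : (X.prod Y).α) :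
    (X.prod Y).X ⁻¹' {w} ⊆ Y.X ⁻¹' {w.2} :=
  fun _ hω => congrArg Prod.snd hω

theorem pmf_ne_zero_of_preimage_subset (μ : Measure Ω) [IsFiniteMeasure μ] {W V : FRV Ω}
    {w : W.α} {v : V.α} (hsub : W.X ⁻¹' {w} ⊆ V.X ⁻¹' {v}) (hw : W.pmf μ w ≠ 0) :
    V.pmf μ v ≠ 0 := by
  have hle : W.pmf μ w ≤ V.pmf μ v :=
    ENNReal.toReal_mono (measure_ne_top μ _) (measure_mono hsub)
  have hw_pos : 0 < W.pmf μ w := lt_of_le_of_ne ENNReal.toReal_nonneg (Ne.symm hw)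
  exact (hw_pos.trans_le hle).ne'

end FRV

section MarkovTriangle

variable {Ω : Type} [MeasurableSpace Ω] (μ : Measure Ω)

theorem condDist_of_pmf_eq_zero {W V : FRV Ω} {w : W.α} (hw : W.pmf μ w = 0) (v : V.α) :
    condDist μ W V w v = 0 := by
  simp [condDist, hw]

theorem condDist_eq_one_of_preimage_subset {W V : FRV Ω} {w : W.α} {v : V.α}
    (hsub : W.X ⁻¹' {w} ⊆ V.X ⁻¹' {v}) (hw : W.pmf μ w ≠ 0) : condDist μ W V w v = 1 := by
  have hjoint : jointDist μ W V w v = W.pmf μ w := by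
    simp only [jointDist, FRV.pmf, Set.inter_eq_left.mpr hsub]
  rw [condDist, if_pos hw, hjoint, div_self hw]

theorem isMarkovTriangle_of_isConstant [IsFiniteMeasure μ] {W V C : FRV Ω} (g : W.α → V.α)
    (hsub : ∀ w, W.X ⁻¹' {w} ⊆ V.X ⁻¹' {g w}) (hC : C.IsConstant) :
    IsMarkovTriangle μ W V C := by
  refine ⟨fun q => g q.2, fun c w => ?_⟩
  have hC_univ := FRV.preimage_eq_univ_of_isConstant hC c
  by_cases hw : W.pmf μ w = 0
  · rw [condDist_of_pmf_eq_zero μ hw, condDist_of_pmf_eq_zero μ hw, mul_zero]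
  · have hv := FRV.pmf_ne_zero_of_preimage_subset μ (hsub w) hw
    rw [condDist_eq_one_of_preimage_subset μ (hC_univ ▸ Set.subset_univ _) hw,
      condDist_eq_one_of_preimage_subset μ (hC_univ ▸ Set.subset_univ _) hv,
      condDist_eq_one_of_preimage_subset μ (hsub w) hw, mul_one]

end MarkovTriangle

theorem PF.eq_diag_of_preimage_subset {F : PairFunctional} (hF : PF.WeaklyFunctorial F)
    (hF₀ : PF.VanishesOnConstants F) {Ω : Type} [MeasurableSpace Ω] (μ : Measure Ω)
    [IsProbabilityMeasure μ] {W V : FRV Ω} (g : W.α → V.α)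
    (hsub : ∀ w, W.X ⁻¹' {w} ⊆ V.X ⁻¹' {g w}) :
    F Ω μ W V = F Ω μ V V := by
  have hC := FRV.isConstant_unit (Ω := Ω)
  have h := hF Ω μ W V _ (isMarkovTriangle_of_isConstant μ g hsub hC)
  rw [hF₀ Ω μ W _ hC, hF₀ Ω μ V _ hC] at h
  linarith

theorem F_prod_eq_diag_general (F : PairFunctional) (h3 : PF.Symm F)
    (h4 : PF.WeaklyFunctorial F)
    (h6 : PF.VanishesOnConstants F)
    {Ω : Type} [MeasurableSpace Ω] (μ : Measure Ω) [IsProbabilityMeasure μ]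
    (X Y : FRV Ω) :
    F Ω μ X (X.prod Y) = F Ω μ X X ∧ F Ω μ (X.prod Y) Y = F Ω μ Y Y :=
  ⟨(h3 Ω μ X _).trans
      (PF.eq_diag_of_preimage_subset h4 h6 μ Prod.fst (X.preimage_prod_subset_fst Y)),
    PF.eq_diag_of_preimage_subset h4 h6 μ Prod.snd (X.preimage_prod_subset_snd Y)⟩

/-- If `F` is a non-negative, continuous, strongly additive, symmetric,
weakly functorial, pullback-invariant map on pairs of finite random variables which
vanishes on constants, then `F(X, 𝒫(X,Y)) = F(X,X)` and `F(𝒫(X,Y), Y) = F(Y,Y)`. -/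
theorem F_prod_eq_diag (F : PairFunctional) (h0 : PF.Nonneg F)
    (h1 : PF.Continuous F) (h2 : PF.StronglyAdditive F) (h3 : PF.Symm F)
    (h4 : PF.WeaklyFunctorial F) (h5 : PF.PullbackInvariant F)
    (h6 : PF.VanishesOnConstants F)
    {Ω : Type} [MeasurableSpace Ω] (μ : Measure Ω) [IsProbabilityMeasure μ]
    (X Y : FRV Ω) :
    F Ω μ X (X.prod Y) = F Ω μ X X ∧ F Ω μ (X.prod Y) Y = F Ω μ Y Y :=
  F_prod_eq_diag_general F h3 h4 h6 μ X Y
end
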